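/- Applying the Laplacian t times to f_k(x) = Σ_{j=0}^{⌊k/2⌋} |x|^{2j} h_{k-2j}(x) (with h_{k-2j} harmonic homogeneous of degree k-2j) gives Δ^t f_k(x) = Σ_{j=t}^{⌊k/2⌋} [(2j)!! (n+2k-2j-2)!! / ((2j-2t)!! (n+2k-2j-2t-2)!!)] · |x|^{2(j-t)} h_{k-2j}(x). -/

import Mathlib

/-! For `p` harmonic and homogeneous of degree `d`, the Leibniz rule for `Δ` together with Euler's
identity (for `p` and for the homogeneous polynomial `|x|^{2m}`) gives
`Δ (|x|^{2(m+1)} p) = 2(m+1) (n + 2d + 2m) |x|^{2m} p`.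
Iterating, the factors `2(m+1)` and `n + 2d + 2m` telescope into the two ratios of double
factorials; a term with `j < t` dies once `Δ` reaches the harmonic `p`. -/

open MvPolynomial Finset Nat

namespace MvPolynomial

variable {σ R : Type*} [Fintype σ]

section CommRing

variable [CommRing R]

noncomputable def laplacian : Module.End R (MvPolynomial σ R) :=
  ∑ i, (pderiv i).toLinearMap ^ 2

theorem laplacian_apply (p : MvPolynomial σ R) :
    laplacian p = ∑ i, pderiv i (pderiv i p) := by
  simp [laplacian, sq]

variable (σ R) in
noncomputable def normSq : MvPolynomial σ R := ∑ i, X i ^ 2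

theorem isHomogeneous_normSq : (normSq σ R).IsHomogeneous 2 :=
  IsHomogeneous.sum _ _ _ fun i _ => by simpa using isHomogeneous_X_pow (R := R) i 2

theorem pderiv_normSq (i : σ) : pderiv i (normSq σ R) = 2 * X i := by
  classical
  simp [normSq, pderiv_X, Pi.single_apply]

theorem pderiv_normSq_pow_succ (i : σ) (m : ℕ) :
    pderiv i (normSq σ R ^ (m + 1)) = (2 * (m + 1)) • (normSq σ R ^ m * X i) := by
  rw [pderiv_pow, pderiv_normSq, nsmul_eq_mul]
  push_cast
  ring

theorem laplacian_mul (f g : MvPolynomial σ R) :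
    laplacian (f * g) =
      laplacian f * g + 2 • ∑ i, pderiv i f * pderiv i g + f * laplacian g := by
  simp only [laplacian_apply, pderiv_mul, map_add, Finset.sum_add_distrib, Finset.sum_mul,
    Finset.mul_sum, two_nsmul]
  abel

theorem laplacian_normSq_pow_succ (m : ℕ) :
    laplacian (normSq σ R ^ (m + 1)) =
      (2 * (m + 1) * (Fintype.card σ + 2 * m)) • normSq σ R ^ m := by
  have euler := (isHomogeneous_normSq (σ := σ) (R := R)).pow m |>.sum_X_mul_pderiv
  simp only [laplacian_apply, pderiv_normSq_pow_succ, map_nsmul, pderiv_mul, pderiv_X_self,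
    mul_one, ← Finset.smul_sum, Finset.sum_add_distrib, Finset.sum_const, Finset.card_univ]
  simp_rw [mul_comm _ (X _), euler]
  rw [← add_smul, smul_smul]
  ring_nf

theorem sum_pderiv_normSq_pow_succ_mul_pderiv {p : MvPolynomial σ R} {d : ℕ}
    (hp : p.IsHomogeneous d) (m : ℕ) :
    ∑ i, pderiv i (normSq σ R ^ (m + 1)) * pderiv i p =
      (2 * (m + 1) * d) • (normSq σ R ^ m * p) := by
  simp only [pderiv_normSq_pow_succ, smul_mul_assoc, ← Finset.smul_sum, mul_assoc,
    ← Finset.mul_sum, hp.sum_X_mul_pderiv, mul_smul_comm, smul_smul]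

theorem laplacian_normSq_pow_succ_mul {p : MvPolynomial σ R} {d : ℕ}
    (hp : p.IsHomogeneous d) (hΔ : laplacian p = 0) (m : ℕ) :
    laplacian (normSq σ R ^ (m + 1) * p) =
      (2 * (m + 1) * (Fintype.card σ + 2 * d + 2 * m)) • (normSq σ R ^ m * p) := by
  rw [laplacian_mul, laplacian_normSq_pow_succ, sum_pderiv_normSq_pow_succ_mul_pderiv hp, hΔ,
    mul_zero, add_zero, smul_mul_assoc, smul_smul, ← add_smul]
  ring_nf

theorem laplacian_pow_succ_normSq_pow_mul {p : MvPolynomial σ R} {d : ℕ}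
    (hp : p.IsHomogeneous d) (hΔ : laplacian p = 0) (m : ℕ) :
    (laplacian ^ (m + 1)) (normSq σ R ^ m * p) = 0 := by
  induction m with
  | zero => rw [pow_one, pow_zero, one_mul, hΔ]
  | succ m ih =>
    rw [_root_.pow_succ, Module.End.mul_apply, laplacian_normSq_pow_succ_mul hp hΔ, map_nsmul, ih,
      smul_zero]

end CommRing

section Field

variable [Field R] [CharZero R]

theorem laplacian_pow_normSq_pow_add_mul {p : MvPolynomial σ R} {d M : ℕ}
    (hp : p.IsHomogeneous d) (hΔ : laplacian p = 0) (hM : Fintype.card σ + 2 * d = M + 2)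
    (t m : ℕ) :
    (laplacian ^ t) (normSq σ R ^ (m + t) * p) =
      (((2 * (m + t))‼ * (M + 2 * (m + t))‼ : ℕ) /
        ((2 * m)‼ * (M + 2 * m)‼ : ℕ) : R) •
        (normSq σ R ^ m * p) := by
  induction t generalizing m with
  | zero =>
    rw [pow_zero, Module.End.one_apply, add_zero, div_self, one_smul]
    exact Nat.cast_ne_zero.mpr (Nat.mul_ne_zero (Nat.doubleFactorial_pos _).ne'
      (Nat.doubleFactorial_pos _).ne')
  | succ t ih =>
    rw [_root_.pow_succ', Module.End.mul_apply, show m + (t + 1) = m + 1 + t by ring, ih,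
      map_smul, laplacian_normSq_pow_succ_mul hp hΔ, ← Nat.cast_smul_eq_nsmul R, smul_smul]
    congr 1
    rw [show 2 * (m + 1) = 2 * m + 2 by ring, show M + (2 * m + 2) = M + 2 * m + 2 by ring,
      Nat.doubleFactorial_add_two, Nat.doubleFactorial_add_two,
      show Fintype.card σ + 2 * d + 2 * m = M + 2 * m + 2 by omega]
    have h₁ : ((2 * m)‼ : R) ≠ 0 := Nat.cast_ne_zero.mpr (Nat.doubleFactorial_pos _).ne'
    have h₂ : ((M + 2 * m)‼ : R) ≠ 0 := Nat.cast_ne_zero.mpr (Nat.doubleFactorial_pos _).ne'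
    have h₃ : ((2 * m + 2 : ℕ) : R) ≠ 0 := Nat.cast_ne_zero.mpr (by omega)
    have h₄ : ((M + 2 * m + 2 : ℕ) : R) ≠ 0 := Nat.cast_ne_zero.mpr (by omega)
    push_cast at h₃ h₄ ⊢
    field_simp

end Field

end MvPolynomial

/-- Applying the Laplacian `t` times to a harmonic decomposition
`f = ∑_{j=0}^{⌊k/2⌋} |x|^{2j} h_{k-2j}` gives
`Δᵗ f = ∑_{j=t}^{⌊k/2⌋} ((2j)‼ (n+2k-2j-2)‼ / ((2j-2t)‼ (n+2k-2j-2t-2)‼)) |x|^{2(j-t)} h_{k-2j}`. -/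
theorem laplacian_iterate_harmonic_decomposition (n k t : ℕ) (hn : 2 ≤ n)
    (h : ℕ → MvPolynomial (Fin n) ℂ)
    (hharm : ∀ j ≤ k / 2, (∑ i : Fin n, pderiv i (pderiv i (h j))) = 0)
    (hhom : ∀ j ≤ k / 2, (h j).IsHomogeneous (k - 2 * j)) :
    (fun g : MvPolynomial (Fin n) ℂ =>
        ∑ i : Fin n, pderiv i (pderiv i g))^[t]
      (∑ j ∈ Finset.range (k / 2 + 1), (∑ i : Fin n, X i ^ 2) ^ j * h j)
    = ∑ j ∈ Finset.Icc t (k / 2),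
        ((((2 * j)‼ * (n + 2 * k - 2 * j - 2)‼ : ℕ) : ℂ) /
            (((2 * j - 2 * t)‼ * (n + 2 * k - 2 * j - 2 * t - 2)‼ : ℕ) : ℂ)) •
          ((∑ i : Fin n, X i ^ 2) ^ (j - t) * h j) := by
  have hΔ : ∀ j ≤ k / 2, laplacian (h j) = 0 := fun j hj =>
    (laplacian_apply _).trans (hharm j hj)
  simp only [← laplacian_apply, ← Module.End.coe_pow, ← normSq.eq_1, map_sum]
  rw [← Finset.sum_subset (s₁ := Icc t (k / 2))
    (fun j hj => by simp only [mem_Icc, mem_range] at hj ⊢; omega) fun j hj hjt => ?_]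
  · refine Finset.sum_congr rfl fun j hj => ?_
    obtain ⟨htj, hjk⟩ := mem_Icc.mp hj
    have hcard : Fintype.card (Fin n) + 2 * (k - 2 * j) = n + 2 * (k - 2 * j) - 2 + 2 := by
      rw [Fintype.card_fin]
      omega
    have hstep := laplacian_pow_normSq_pow_add_mul (hhom j hjk) (hΔ j hjk) hcard t (j - t)
    rw [Nat.sub_add_cancel htj] at hstep
    rw [hstep]
    congr 6 <;> omega
  · simp only [mem_Icc, mem_range, not_and, not_le] at hj hjt
    exact Module.End.pow_map_zero_of_le (by omega)
      (laplacian_pow_succ_normSq_pow_mul (hhom j (by omega)) (hΔ j (by omega)) j)
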